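/- The vector field v defined piecewise as v(x) = (0, 4x₁) if 1/2 > |x₁| > |x₂|, v(x) = (-4x₂, 0) if 1/2 > |x₂| > |x₁|, and (0,0) otherwise, is divergence-free in the sense of distributions: for every φ ∈ C_c^∞(ℝ²), ∫ v(x) · ∇φ(x) dx = 0. -/

import Mathlib

open MeasureTheory Set

/-- The two regions. -/
private def regA : Set (ℝ × ℝ) := {p : ℝ × ℝ | |p.1| < 1/2 ∧ |p.2| < |p.1|}
private def regB : Set (ℝ × ℝ) := {p : ℝ × ℝ | |p.2| < 1/2 ∧ |p.1| < |p.2|}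

private lemma measA : MeasurableSet regA :=
  (measurableSet_lt measurable_fst.abs measurable_const).inter
    (measurableSet_lt measurable_snd.abs measurable_fst.abs)

private lemma measB : MeasurableSet regB :=
  (measurableSet_lt measurable_snd.abs measurable_const).inter
    (measurableSet_lt measurable_fst.abs measurable_snd.abs)

private lemma contD (φ : ℝ × ℝ → ℝ) (hφ : ContDiff ℝ (⊤ : ℕ∞) φ) (u : ℝ × ℝ) :
    Continuous fun x => fderiv ℝ φ x u :=
  (hφ.continuous_fderiv (by simp)).clm_apply continuous_const

private lemma suppD (φ : ℝ × ℝ → ℝ) (hφs : HasCompactSupport φ) (u : ℝ × ℝ) :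
    HasCompactSupport fun x => fderiv ℝ φ x u :=
  (hφs.fderiv ℝ).comp_left (g := fun L : ℝ × ℝ →L[ℝ] ℝ => L u) rfl

private lemma hd2 (φ : ℝ × ℝ → ℝ) (hφ : ContDiff ℝ (⊤ : ℕ∞) φ) (t s : ℝ) :
    HasDerivAt (fun s => φ (t, s)) (fderiv ℝ φ (t, s) (0, 1)) s :=
  (hφ.differentiable (by simp) (t, s)).hasFDerivAt.comp_hasDerivAt s
    ((hasDerivAt_const s t).prodMk (hasDerivAt_id s))

private lemma hd1 (φ : ℝ × ℝ → ℝ) (hφ : ContDiff ℝ (⊤ : ℕ∞) φ) (t s : ℝ) :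
    HasDerivAt (fun t => φ (t, s)) (fderiv ℝ φ (t, s) (1, 0)) t :=
  (hφ.differentiable (by simp) (t, s)).hasFDerivAt.comp_hasDerivAt t
    ((hasDerivAt_id t).prodMk (hasDerivAt_const t s))

private lemma inner_g (φ : ℝ × ℝ → ℝ) (hφ : ContDiff ℝ (⊤ : ℕ∞) φ) (t : ℝ) :
    (∫ s : ℝ, regA.indicator (fun x => (4 * x.1) * fderiv ℝ φ x (0, 1)) (t, s))
      = (Ioo (-(1/2) : ℝ) (1/2)).indicator
          (fun t => 4 * t * (φ (t, |t|) - φ (t, -|t|))) t := by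
  by_cases ht : |t| < 1/2
  · have h1 : (fun s => regA.indicator (fun x => (4 * x.1) * fderiv ℝ φ x (0, 1)) (t, s))
        = (Ioo (-|t|) |t|).indicator (fun s => (4 * t) * fderiv ℝ φ (t, s) (0, 1)) := by
      funext s
      by_cases hs : |s| < |t|
      · rw [indicator_of_mem (show (t, s) ∈ regA from ⟨ht, hs⟩),
          indicator_of_mem (show s ∈ Ioo (-|t|) |t| from by
            rcases abs_lt.mp hs with ⟨h1, h2⟩; exact ⟨h1, h2⟩)]
      · rw [indicator_of_notMem (show (t, s) ∉ regA from fun h => hs h.2),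
          indicator_of_notMem (show s ∉ Ioo (-|t|) |t| from fun h => hs (abs_lt.mpr ⟨h.1, h.2⟩))]
    rw [h1, integral_indicator measurableSet_Ioo, ← integral_Ioc_eq_integral_Ioo,
      ← intervalIntegral.integral_of_le (neg_abs_le t |>.trans (le_abs_self t)),
      intervalIntegral.integral_const_mul,
      intervalIntegral.integral_eq_sub_of_hasDerivAt
        (f := fun s => φ (t, s)) (fun s _ => hd2 φ hφ t s)
        (((contD φ hφ (0, 1)).comp (continuous_const.prodMk continuous_id)).intervalIntegrable _ _),
      indicator_of_mem (show t ∈ Ioo (-(1/2) : ℝ) (1/2) from by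
        rcases abs_lt.mp ht with ⟨h1, h2⟩; exact ⟨h1, h2⟩)]
  · have h1 : (fun s => regA.indicator (fun x => (4 * x.1) * fderiv ℝ φ x (0, 1)) (t, s))
        = fun _ => (0 : ℝ) := by
      funext s
      exact indicator_of_notMem (fun h => ht h.1) _
    rw [h1, integral_zero, indicator_of_notMem]
    intro h
    exact ht (abs_lt.mpr ⟨h.1, h.2⟩)

private lemma inner_h (φ : ℝ × ℝ → ℝ) (hφ : ContDiff ℝ (⊤ : ℕ∞) φ) (s : ℝ) :
    (∫ t : ℝ, regB.indicator (fun x => (-4 * x.2) * fderiv ℝ φ x (1, 0)) (t, s))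
      = (Ioo (-(1/2) : ℝ) (1/2)).indicator
          (fun s => -4 * s * (φ (|s|, s) - φ (-|s|, s))) s := by
  by_cases hs : |s| < 1/2
  · have h1 : (fun t => regB.indicator (fun x => (-4 * x.2) * fderiv ℝ φ x (1, 0)) (t, s))
        = (Ioo (-|s|) |s|).indicator (fun t => (-4 * s) * fderiv ℝ φ (t, s) (1, 0)) := by
      funext t
      by_cases ht : |t| < |s|
      · rw [indicator_of_mem (show (t, s) ∈ regB from ⟨hs, ht⟩),
          indicator_of_mem (show t ∈ Ioo (-|s|) |s| from by
            rcases abs_lt.mp ht with ⟨h1, h2⟩; exact ⟨h1, h2⟩)]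
      · rw [indicator_of_notMem (show (t, s) ∉ regB from fun h => ht h.2),
          indicator_of_notMem (show t ∉ Ioo (-|s|) |s| from fun h => ht (abs_lt.mpr ⟨h.1, h.2⟩))]
    rw [h1, integral_indicator measurableSet_Ioo, ← integral_Ioc_eq_integral_Ioo,
      ← intervalIntegral.integral_of_le (neg_abs_le s |>.trans (le_abs_self s)),
      intervalIntegral.integral_const_mul,
      intervalIntegral.integral_eq_sub_of_hasDerivAt
        (f := fun t => φ (t, s)) (fun t _ => hd1 φ hφ t s)
        (((contD φ hφ (1, 0)).comp (continuous_id.prodMk continuous_const)).intervalIntegrable _ _),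
      indicator_of_mem (show s ∈ Ioo (-(1/2) : ℝ) (1/2) from by
        rcases abs_lt.mp hs with ⟨h1, h2⟩; exact ⟨h1, h2⟩)]
  · have h1 : (fun t => regB.indicator (fun x => (-4 * x.2) * fderiv ℝ φ x (1, 0)) (t, s))
        = fun _ => (0 : ℝ) := by
      funext t
      exact indicator_of_notMem (fun h => hs h.1) _
    rw [h1, integral_zero, indicator_of_notMem]
    intro h
    exact hs (abs_lt.mpr ⟨h.1, h.2⟩)

theorem stmt1 (v : ℝ × ℝ → ℝ × ℝ)
    (hv : ∀ x : ℝ × ℝ,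
      v x = if 1/2 > |x.1| ∧ |x.1| > |x.2| then ((0 : ℝ), 4 * x.1)
        else if 1/2 > |x.2| ∧ |x.2| > |x.1| then (-4 * x.2, (0 : ℝ))
        else ((0 : ℝ), (0 : ℝ))) :
    ∀ φ : ℝ × ℝ → ℝ, ContDiff ℝ (⊤ : ℕ∞) φ → HasCompactSupport φ →
      ∫ x : ℝ × ℝ, fderiv ℝ φ x (v x) = 0 := by
  intro φ hφ hφs
  set g : ℝ × ℝ → ℝ := fun x => regA.indicator (fun x => (4 * x.1) * fderiv ℝ φ x (0, 1)) x
    with hgdef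
  set h : ℝ × ℝ → ℝ := fun x => regB.indicator (fun x => (-4 * x.2) * fderiv ℝ φ x (1, 0)) x
    with hhdef
  -- pointwise decomposition
  have hfg : ∀ x, fderiv ℝ φ x (v x) = g x + h x := by
    intro x
    rw [hv]
    by_cases h1 : 1/2 > |x.1| ∧ |x.1| > |x.2|
    · have hxA : x ∈ regA := ⟨h1.1, h1.2⟩
      have hxB : x ∉ regB := fun hb => absurd h1.2 (not_lt.mpr hb.2.le)
      rw [if_pos h1, hgdef, hhdef]
      simp only [indicator_of_mem hxA, indicator_of_notMem hxB, add_zero]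
      have : ((0 : ℝ), 4 * x.1) = (4 * x.1) • ((0 : ℝ), (1 : ℝ)) := by
        simp [Prod.smul_def]
      rw [this, ContinuousLinearMap.map_smul, smul_eq_mul]
    · rw [if_neg h1]
      by_cases h2 : 1/2 > |x.2| ∧ |x.2| > |x.1|
      · have hxB : x ∈ regB := ⟨h2.1, h2.2⟩
        have hxA : x ∉ regA := fun ha => absurd h2.2 (not_lt.mpr ha.2.le)
        rw [if_pos h2, hgdef, hhdef]
        simp only [indicator_of_mem hxB, indicator_of_notMem hxA, zero_add]
        have : ((-4 : ℝ) * x.2, (0 : ℝ)) = (-4 * x.2) • ((1 : ℝ), (0 : ℝ)) := by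
          simp [Prod.smul_def]
        rw [this, ContinuousLinearMap.map_smul, smul_eq_mul]
      · have hxA : x ∉ regA := fun ha => h1 ⟨ha.1, ha.2⟩
        have hxB : x ∉ regB := fun hb => h2 ⟨hb.1, hb.2⟩
        rw [if_neg h2, hgdef, hhdef]
        simp only [indicator_of_notMem hxA, indicator_of_notMem hxB, add_zero]
        have : ((0 : ℝ), (0 : ℝ)) = (0 : ℝ × ℝ) := rfl
        rw [this, map_zero]
  -- integrability
  have hD2int : Integrable (fun x => fderiv ℝ φ x ((0 : ℝ), (1 : ℝ))) volume :=
    (contD φ hφ _).integrable_of_hasCompactSupport (suppD φ hφs _)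
  have hD1int : Integrable (fun x => fderiv ℝ φ x ((1 : ℝ), (0 : ℝ))) volume :=
    (contD φ hφ _).integrable_of_hasCompactSupport (suppD φ hφs _)
  have hg_eq : g = fun x => (regA.indicator (fun x => 4 * x.1) x) * fderiv ℝ φ x (0, 1) := by
    funext x
    by_cases hx : x ∈ regA
    · simp [hgdef, indicator_of_mem hx]
    · simp [hgdef, indicator_of_notMem hx]
  have hh_eq : h = fun x => (regB.indicator (fun x => -4 * x.2) x) * fderiv ℝ φ x (1, 0) := by
    funext x
    by_cases hx : x ∈ regB
    · simp [hhdef, indicator_of_mem hx]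
    · simp [hhdef, indicator_of_notMem hx]
  have hg_int : Integrable g volume := by
    rw [hg_eq]
    refine hD2int.bdd_mul (c := 2) ?_ (Filter.Eventually.of_forall fun x => ?_)
    · exact ((continuous_const.mul continuous_fst).aestronglyMeasurable).indicator measA
    · by_cases hx : x ∈ regA
      · rw [indicator_of_mem hx, Real.norm_eq_abs, abs_mul]
        have := hx.1
        rw [abs_of_nonneg (by norm_num : (0:ℝ) ≤ 4)]
        nlinarith [abs_nonneg x.1]
      · simp [indicator_of_notMem hx]
  have hh_int : Integrable h volume := by
    rw [hh_eq]
    refine hD1int.bdd_mul (c := 2) ?_ (Filter.Eventually.of_forall fun x => ?_)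
    · exact ((continuous_const.mul continuous_snd).aestronglyMeasurable).indicator measB
    · by_cases hx : x ∈ regB
      · rw [indicator_of_mem hx, Real.norm_eq_abs, abs_mul]
        have := hx.1
        rw [show |(-4 : ℝ)| = 4 by norm_num]
        nlinarith [abs_nonneg x.2]
      · simp [indicator_of_notMem hx]
  have hsplit : ∫ x : ℝ × ℝ, fderiv ℝ φ x (v x) = (∫ x, g x) + ∫ x, h x := by
    rw [show (fun x : ℝ × ℝ => fderiv ℝ φ x (v x)) = fun x => g x + h x from funext hfg]
    exact integral_add hg_int hh_int
  -- Fubini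
  have hGfub : ∫ x : ℝ × ℝ, g x
      = ∫ t : ℝ, (Ioo (-(1/2) : ℝ) (1/2)).indicator
          (fun t => 4 * t * (φ (t, |t|) - φ (t, -|t|))) t := by
    rw [Measure.volume_eq_prod] at hg_int ⊢
    rw [integral_prod g hg_int]
    exact integral_congr_ae (Filter.Eventually.of_forall fun t => inner_g φ hφ t)
  have hHfub : ∫ x : ℝ × ℝ, h x
      = ∫ s : ℝ, (Ioo (-(1/2) : ℝ) (1/2)).indicator
          (fun s => -4 * s * (φ (|s|, s) - φ (-|s|, s))) s := by
    rw [Measure.volume_eq_prod] at hh_int ⊢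
    rw [integral_prod_symm h hh_int]
    exact integral_congr_ae (Filter.Eventually.of_forall fun s => inner_h φ hφ s)
  -- convert to interval integrals
  have hnum : (-(1/2) : ℝ) ≤ 1/2 := by norm_num
  have hGint : ∫ x : ℝ × ℝ, g x
      = ∫ t in (-(1/2) : ℝ)..(1/2), 4 * t * (φ (t, |t|) - φ (t, -|t|)) := by
    rw [hGfub, integral_indicator measurableSet_Ioo, ← integral_Ioc_eq_integral_Ioo,
      ← intervalIntegral.integral_of_le hnum]
  have hHint : ∫ x : ℝ × ℝ, h x
      = ∫ s in (-(1/2) : ℝ)..(1/2), -4 * s * (φ (|s|, s) - φ (-|s|, s)) := by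
    rw [hHfub, integral_indicator measurableSet_Ioo, ← integral_Ioc_eq_integral_Ioo,
      ← intervalIntegral.integral_of_le hnum]
  -- final cancellation
  set w : ℝ → ℝ := fun t => 4 * t * (φ (t, |t|) - φ (t, -|t|)) + -4 * t * (φ (|t|, t) - φ (-|t|, t))
    with hwdef
  have hφc : Continuous φ := hφ.continuous
  have hc1 : Continuous fun t : ℝ => 4 * t * (φ (t, |t|) - φ (t, -|t|)) := by
    fun_prop
  have hc2 : Continuous fun t : ℝ => -4 * t * (φ (|t|, t) - φ (-|t|, t)) := by
    fun_prop
  have hwcont : Continuous w := hc1.add hc2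
  have hwsum : (∫ x : ℝ × ℝ, g x) + (∫ x : ℝ × ℝ, h x)
      = ∫ t in (-(1/2) : ℝ)..(1/2), w t := by
    rw [hGint, hHint, hwdef, ← intervalIntegral.integral_add
      (hc1.intervalIntegrable _ _) (hc2.intervalIntegrable _ _)]
  have hodd : ∀ t, w (-t) = -w t := by
    intro t
    rcases le_total 0 t with h0 | h0
    · simp only [hwdef, abs_neg, abs_of_nonneg h0, neg_neg]
      ring
    · simp only [hwdef, abs_neg, abs_of_nonpos h0, neg_neg]
      ring
  have hzero : ∫ t in (-(1/2) : ℝ)..(1/2), w t = 0 := by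
    have h1 : ∫ t in (-(1/2) : ℝ)..(1/2), w (-t) = ∫ t in (-(1/2) : ℝ)..(1/2), w t := by
      rw [intervalIntegral.integral_comp_neg w]
      norm_num
    have h2 : ∫ t in (-(1/2) : ℝ)..(1/2), w (-t) = -∫ t in (-(1/2) : ℝ)..(1/2), w t := by
      simp_rw [hodd]
      exact intervalIntegral.integral_neg
    linarith [h1, h2]
  rw [hsplit, hwsum, hzero]
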